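/- (Necessity in Theorem 2, part 1.) Suppose λ_min is a simple eigenvalue of G (its eigenspace is one-dimensional) and the equal-probability measurement is optimal, i.e. Σ_i η_i p_i ≤ λ_min for every primal feasible p. Then every unit vector u ∈ ℂ^m with G u = λ_min u satisfies |u_i|² = η_i for all 1 ≤ i ≤ m. -/

import Mathlib

open Matrix BigOperators ComplexOrder

noncomputable section

/-- The reciprocal states: columns of `Φ (ΦᴴΦ)⁻¹`. -/
def reciprocal {r m : ℕ} (Φ : Matrix (Fin r) (Fin m) ℂ) : Matrix (Fin r) (Fin m) ℂ :=
  Φ * (Φᴴ * Φ)⁻¹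

/-- The rank-one operator `Q_i = φ̃_i φ̃_iᴴ`. -/
def Qop {r m : ℕ} (Φ : Matrix (Fin r) (Fin m) ℂ) (i : Fin m) : Matrix (Fin r) (Fin r) ℂ :=
  vecMulVec (fun a => reciprocal Φ a i) (fun b => star (reciprocal Φ b i))

/-- `p` is primal feasible: `p_i ≥ 0` and `I - Σ p_i Q_i ⪰ 0`. -/
def PrimalFeasible {r m : ℕ} (Φ : Matrix (Fin r) (Fin m) ℂ) (p : Fin m → ℝ) : Prop :=
  (∀ i, 0 ≤ p i) ∧
    ((1 : Matrix (Fin r) (Fin r) ℂ) - ∑ i : Fin m, (p i : ℂ) • Qop Φ i).PosSemidef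

/-- `(X, z)` is dual feasible: `X ⪰ 0`, `z_i ≥ 0` and `Re Tr(Q_i X) = η_i + z_i`. -/
def DualFeasible {r m : ℕ} (Φ : Matrix (Fin r) (Fin m) ℂ) (η : Fin m → ℝ)
    (X : Matrix (Fin r) (Fin r) ℂ) (z : Fin m → ℝ) : Prop :=
  X.PosSemidef ∧ (∀ i, 0 ≤ z i) ∧ ∀ i, (Matrix.trace (Qop Φ i * X)).re = η i + z i

/-!
Write `G = ΦᴴΦ` and `Φ̃ = ΦG⁻¹`. A nonnegative `p` with `G - diag p ⪰ 0` is primal feasible, because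
`I - Σ pᵢQᵢ = (I - P)ᴴ(I - P) + Φ̃ (G - diag p) Φ̃ᴴ` where `P = ΦΦ̃ᴴ` is the orthogonal projection
onto the range of `Φ`.

Let `u` be a unit eigenvector for `λ_min` and `c` a real vector with `Σ cⱼ|uⱼ|² < 0`. As the kernel
of `G - λ_min` is `ℂu`, the form of `diag c` is negative on it, so by compactness of the unit
sphere `G - λ_min - s diag c ⪰ 0` for all small `s > 0`. Then `p = λ_min + s c` is feasible, and
optimality of the EPM gives `Σ ηⱼcⱼ ≤ 0`. Two probability vectors with this property relative to
each other coincide, so `η = (|uⱼ|²)ⱼ`.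
-/

open Topology

namespace Matrix

variable {𝕜 n : Type*} [RCLike 𝕜] [Fintype n]

def reQuadForm (A : Matrix n n 𝕜) (x : n → 𝕜) : ℝ :=
  RCLike.re (star x ⬝ᵥ A *ᵥ x)

lemma IsHermitian.posSemidef_iff_reQuadForm_nonneg {A : Matrix n n 𝕜} (hA : A.IsHermitian) :
    A.PosSemidef ↔ ∀ x, 0 ≤ reQuadForm A x := by
  refine ⟨fun h x => h.re_dotProduct_nonneg x, fun h => .of_dotProduct_mulVec_nonneg hA fun x => ?_⟩
  rw [RCLike.nonneg_iff]
  exact ⟨h x, hA.im_star_dotProduct_mulVec_self x⟩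

lemma PosSemidef.mulVec_eq_zero_of_reQuadForm_eq_zero {A : Matrix n n 𝕜} (hA : A.PosSemidef)
    {x : n → 𝕜} (hx : reQuadForm A x = 0) : A *ᵥ x = 0 := by
  rw [← hA.dotProduct_mulVec_zero_iff]
  exact RCLike.ext (by simpa [reQuadForm] using hx)
    (by simpa using hA.1.im_star_dotProduct_mulVec_self x)

lemma continuous_reQuadForm (A : Matrix n n 𝕜) : Continuous (reQuadForm A) := by
  unfold reQuadForm
  simp only [mulVec, dotProduct]
  fun_prop

lemma reQuadForm_smul (A : Matrix n n 𝕜) (a : 𝕜) (x : n → 𝕜) :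
    reQuadForm A (a • x) = ‖a‖ ^ 2 * reQuadForm A x := by
  simp only [reQuadForm, mulVec_smul, star_smul, smul_dotProduct, dotProduct_smul, smul_eq_mul,
    ← mul_assoc, RCLike.star_def, RCLike.mul_conj]
  rw [← RCLike.ofReal_pow, RCLike.re_ofReal_mul]

lemma reQuadForm_real_smul (A : Matrix n n 𝕜) (t : ℝ) (x : n → 𝕜) :
    reQuadForm (t • A) x = t * reQuadForm A x := by
  simp [reQuadForm, smul_mulVec, dotProduct_smul, RCLike.smul_re]

lemma reQuadForm_sub (A B : Matrix n n 𝕜) (x : n → 𝕜) :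
    reQuadForm (A - B) x = reQuadForm A x - reQuadForm B x := by
  simp [reQuadForm, sub_mulVec, dotProduct_sub]

lemma reQuadForm_diagonal [DecidableEq n] (c : n → ℝ) (x : n → 𝕜) :
    reQuadForm (diagonal fun j => (c j : 𝕜)) x = ∑ j, c j * ‖x j‖ ^ 2 := by
  simp only [reQuadForm, dotProduct, mulVec_diagonal, map_sum, Pi.star_apply, RCLike.star_def]
  refine Finset.sum_congr rfl fun j _ => ?_
  rw [mul_left_comm, RCLike.conj_mul, ← RCLike.ofReal_pow, ← RCLike.ofReal_mul, RCLike.ofReal_re]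

lemma reQuadForm_le_of_forall_mem_sphere {A B : Matrix n n 𝕜}
    (h : ∀ x ∈ Metric.sphere (0 : n → 𝕜) 1, reQuadForm A x ≤ reQuadForm B x) (x : n → 𝕜) :
    reQuadForm A x ≤ reQuadForm B x := by
  rcases eq_or_ne x 0 with rfl | hx0
  · simp [reQuadForm]
  have hnx : 0 < ‖x‖ := norm_pos_iff.mpr hx0
  have hxy : x = (‖x‖ : 𝕜) • ((‖x‖⁻¹ : 𝕜) • x) := by
    rw [smul_smul, mul_inv_cancel₀ (by exact_mod_cast hnx.ne'), one_smul]
  have hy : (‖x‖⁻¹ : 𝕜) • x ∈ Metric.sphere (0 : n → 𝕜) 1 := by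
    rw [mem_sphere_zero_iff_norm, norm_smul, norm_inv, RCLike.norm_ofReal, abs_norm,
      inv_mul_cancel₀ hnx.ne']
  have key := mul_le_mul_of_nonneg_left (h _ hy) (sq_nonneg ‖(‖x‖ : 𝕜)‖)
  rwa [← reQuadForm_smul, ← reQuadForm_smul, ← hxy] at key

lemma PosSemidef.exists_pos_smul_reQuadForm_le {M C : Matrix n n 𝕜} (hM : M.PosSemidef)
    (hC : ∀ x ≠ 0, M *ᵥ x = 0 → reQuadForm C x < 0) :
    ∃ t : ℝ, 0 < t ∧ ∀ x, reQuadForm (t • C) x ≤ reQuadForm M x := by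
  -- `M` is positive on the compact part `K` of the sphere where `C` is nonnegative, so `C / M`
  -- is bounded there
  set K := Metric.sphere (0 : n → 𝕜) 1 ∩ {x | 0 ≤ reQuadForm C x}
  have hK : IsCompact K :=
    (isCompact_sphere 0 1).inter_right (isClosed_le continuous_const (continuous_reQuadForm C))
  have hMpos : ∀ x ∈ K, 0 < reQuadForm M x := by
    rintro x ⟨hx1, hxC⟩
    refine (hM.re_dotProduct_nonneg x).lt_of_ne' fun h0 => ?_
    have hx0 : x ≠ 0 := ne_zero_of_mem_unit_sphere ⟨x, hx1⟩
    exact (hC x hx0 (hM.mulVec_eq_zero_of_reQuadForm_eq_zero h0)).not_ge hxC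
  obtain ⟨B, hB⟩ := hK.bddAbove_image (f := fun x => reQuadForm C x / reQuadForm M x)
    ((continuous_reQuadForm C).continuousOn.div (continuous_reQuadForm M).continuousOn
      fun x hx => (hMpos x hx).ne')
  refine ⟨(|B| + 1)⁻¹, by positivity, reQuadForm_le_of_forall_mem_sphere fun x hx => ?_⟩
  have hMx : 0 ≤ reQuadForm M x := hM.re_dotProduct_nonneg x
  rw [reQuadForm_real_smul, inv_mul_le_iff₀ (by positivity)]
  rcases lt_or_ge (reQuadForm C x) 0 with hCx | hCx
  · nlinarith [abs_nonneg B]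
  · have hxK : x ∈ K := ⟨hx, hCx⟩
    have hratio := hB ⟨x, hxK, rfl⟩
    rw [div_le_iff₀ (hMpos x hxK)] at hratio
    nlinarith [le_abs_self B, hMpos x hxK]

lemma PosSemidef.eventually_posSemidef_sub_smul {M C : Matrix n n 𝕜} (hM : M.PosSemidef)
    (hCh : C.IsHermitian) (hC : ∀ x ≠ 0, M *ᵥ x = 0 → reQuadForm C x < 0) :
    ∀ᶠ s in 𝓝[>] (0 : ℝ), (M - s • C).PosSemidef := by
  obtain ⟨t, ht, hle⟩ := hM.exists_pos_smul_reQuadForm_le hC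
  filter_upwards [Ioc_mem_nhdsGT ht] with s ⟨hs0, hst⟩
  refine ((hM.1.sub (hCh.smul (IsSelfAdjoint.all s))).posSemidef_iff_reQuadForm_nonneg).mpr
    fun x => ?_
  have hMx : 0 ≤ reQuadForm M x := hM.re_dotProduct_nonneg x
  have htx := hle x
  rw [reQuadForm_real_smul] at htx
  rw [reQuadForm_sub, reQuadForm_real_smul]
  rcases le_total (reQuadForm C x) 0 with h | h <;> nlinarith

lemma posSemidef_one_sub_mul_mul_conjTranspose {k : Type*} [Fintype k] [DecidableEq k]
    [DecidableEq n] {Φ Ψ : Matrix k n 𝕜} (hΨΦ : Ψᴴ * Φ = 1)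
    (hP : (Φ * Ψᴴ).IsHermitian) {D : Matrix n n 𝕜} (hD : (Φᴴ * Φ - D).PosSemidef) :
    (1 - Ψ * D * Ψᴴ).PosSemidef := by
  set P := Φ * Ψᴴ
  have hPP : P * P = P := by
    simp only [P, Matrix.mul_assoc, ← Matrix.mul_assoc Ψᴴ, hΨΦ, Matrix.one_mul]
  have hsq : (1 - P)ᴴ * (1 - P) = 1 - P := by
    rw [conjTranspose_sub, conjTranspose_one, hP.eq, Matrix.sub_mul, Matrix.mul_sub,
      Matrix.mul_sub, Matrix.one_mul, Matrix.one_mul, Matrix.mul_one, hPP]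
    abel
  have hcongr : Ψ * (Φᴴ * Φ - D) * Ψᴴ = P - Ψ * D * Ψᴴ := by
    have hPh : Ψ * Φᴴ = P := by rw [← hP.eq]; simp [P]
    rw [Matrix.mul_sub, Matrix.sub_mul, ← Matrix.mul_assoc, hPh, Matrix.mul_assoc, hPP]
  have hsplit : 1 - Ψ * D * Ψᴴ = (1 - P)ᴴ * (1 - P) + Ψ * (Φᴴ * Φ - D) * Ψᴴ := by
    rw [hsq, hcongr, sub_add_sub_cancel]
  rw [hsplit]
  exact (posSemidef_conjTranspose_mul_self _).add (hD.mul_mul_conjTranspose_same Ψ)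

lemma PosDef.pos_of_mulVec_eq_smul {A : Matrix n n 𝕜} (hA : A.PosDef) {u : n → 𝕜} (hu : u ≠ 0)
    {μ : ℝ} (h : A *ᵥ u = (μ : 𝕜) • u) : 0 < μ := by
  have hpos := hA.re_dotProduct_pos hu
  rw [h, dotProduct_smul, smul_eq_mul, RCLike.re_ofReal_mul] at hpos
  exact pos_of_mul_pos_left hpos (RCLike.nonneg_iff.mp (dotProduct_star_self_nonneg u)).1

end Matrix

section reciprocal

variable {r m : ℕ} {Φ : Matrix (Fin r) (Fin m) ℂ}

lemma conjTranspose_reciprocal : (reciprocal Φ)ᴴ = (Φᴴ * Φ)⁻¹ * Φᴴ := by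
  rw [reciprocal, conjTranspose_mul, (isHermitian_conjTranspose_mul_self Φ).inv.eq]

lemma conjTranspose_reciprocal_mul (hG : IsUnit (Φᴴ * Φ)) : (reciprocal Φ)ᴴ * Φ = 1 := by
  rw [conjTranspose_reciprocal, Matrix.mul_assoc,
    nonsing_inv_mul _ ((isUnit_iff_isUnit_det _).mp hG)]

lemma isHermitian_mul_conjTranspose_reciprocal : (Φ * (reciprocal Φ)ᴴ).IsHermitian := by
  rw [conjTranspose_reciprocal, ← Matrix.mul_assoc]
  exact isHermitian_mul_mul_conjTranspose Φ (isHermitian_conjTranspose_mul_self Φ).inv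

lemma sum_smul_Qop (p : Fin m → ℝ) :
    ∑ i, (p i : ℂ) • Qop Φ i =
      reciprocal Φ * diagonal (fun i => (p i : ℂ)) * (reciprocal Φ)ᴴ := by
  ext a b
  rw [Matrix.sum_apply, Matrix.mul_apply]
  simp only [Qop, vecMulVec_apply, Matrix.smul_apply, smul_eq_mul, mul_diagonal,
    conjTranspose_apply]
  exact Finset.sum_congr rfl fun i _ => by ring

lemma primalFeasible_of_posSemidef_gram_sub_diagonal (hG : IsUnit (Φᴴ * Φ)) {p : Fin m → ℝ}
    (hp : ∀ i, 0 ≤ p i)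
    (hD : (Φᴴ * Φ - diagonal (fun i => (p i : ℂ))).PosSemidef) : PrimalFeasible Φ p :=
  ⟨hp, sum_smul_Qop p ▸ posSemidef_one_sub_mul_mul_conjTranspose
    (conjTranspose_reciprocal_mul hG) isHermitian_mul_conjTranspose_reciprocal hD⟩

end reciprocal

lemma eq_of_forall_sum_mul_neg_imp_nonpos {ι : Type*} [Fintype ι] [DecidableEq ι] {a b : ι → ℝ}
    (ha : ∑ j, a j = 1) (hb : ∑ j, b j = 1)
    (h : ∀ c : ι → ℝ, ∑ j, c j * a j < 0 → ∑ j, c j * b j ≤ 0) : a = b := by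
  funext i
  -- the test vector `c = σ (δᵢ - aᵢ) - ε` pairs with `a` to `-ε` and with `b` to `σ (bᵢ - aᵢ) - ε`
  have key : ∀ σ ε : ℝ, 0 < ε → σ * (b i - a i) ≤ ε := by
    intro σ ε hε
    have hpair : ∀ w : ι → ℝ, ∑ j, w j = 1 →
        ∑ j, (σ * ((if j = i then 1 else 0) - a i) - ε) * w j = σ * (w i - a i) - ε := by
      intro w hw
      simp only [sub_mul, mul_assoc, ← Finset.mul_sum, Finset.sum_sub_distrib, ite_mul, one_mul,
        zero_mul, Finset.sum_ite_eq', Finset.mem_univ, if_true, hw, mul_one]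
    have := h _ (by rw [hpair a ha]; linarith)
    rw [hpair b hb] at this
    linarith
  exact le_antisymm (le_of_forall_pos_le_add fun ε hε => by linarith [key (-1) ε hε])
    (le_of_forall_pos_le_add fun ε hε => by linarith [key 1 ε hε])

section epm

variable {r m : ℕ} {Φ : Matrix (Fin r) (Fin m) ℂ} {lam : ℝ}

lemma eventually_primalFeasible_const_add_smul (hG : IsUnit (Φᴴ * Φ)) (hlam : 0 < lam)
    (hmin : (Φᴴ * Φ - (lam : ℂ) • 1).PosSemidef) {c : Fin m → ℝ}
    (hker : ∀ x ≠ 0, (Φᴴ * Φ - (lam : ℂ) • 1) *ᵥ x = 0 →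
      reQuadForm (diagonal fun j => (c j : ℂ)) x < 0) :
    ∀ᶠ s in 𝓝[>] (0 : ℝ), PrimalFeasible Φ (fun j => lam + s * c j) := by
  have hnonneg : ∀ᶠ s in 𝓝[>] (0 : ℝ), ∀ j, 0 ≤ lam + s * c j := by
    refine nhdsWithin_le_nhds (Filter.eventually_all.mpr fun j => ?_)
    have hcont : Continuous fun s : ℝ => lam + s * c j := by fun_prop
    exact (hcont.tendsto 0).eventually (Ici_mem_nhds (by simpa using hlam))
  filter_upwards [hnonneg, hmin.eventually_posSemidef_sub_smul
    (isHermitian_diagonal_iff.mpr fun j => Complex.conj_ofReal (c j)) hker]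
    with s hs hpsd
  have hshift : Φᴴ * Φ - (lam : ℂ) • 1 - s • diagonal (fun j => (c j : ℂ)) =
      Φᴴ * Φ - diagonal (fun j => ((lam + s * c j : ℝ) : ℂ)) := by
    ext a b
    by_cases hab : a = b <;> simp [hab, sub_sub, Complex.real_smul]
  exact primalFeasible_of_posSemidef_gram_sub_diagonal hG hs (hshift ▸ hpsd)

lemma sum_mul_nonpos_of_epm_optimal (hG : IsUnit (Φᴴ * Φ)) {η : Fin m → ℝ}
    (hη1 : ∑ i, η i = 1) (hlam : 0 < lam) (hmin : (Φᴴ * Φ - (lam : ℂ) • 1).PosSemidef)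
    (hopt : ∀ p, PrimalFeasible Φ p → ∑ i, η i * p i ≤ lam) {u : Fin m → ℂ}
    (hsimple : ∀ w, (Φᴴ * Φ) *ᵥ w = (lam : ℂ) • w → ∃ a : ℂ, w = a • u) {c : Fin m → ℝ}
    (hc : ∑ j, c j * ‖u j‖ ^ 2 < 0) : ∑ j, c j * η j ≤ 0 := by
  have hker : ∀ x ≠ 0, (Φᴴ * Φ - (lam : ℂ) • 1) *ᵥ x = 0 →
      reQuadForm (diagonal fun j => (c j : ℂ)) x < 0 := by
    intro x hx0 hx
    rw [sub_mulVec, smul_mulVec, one_mulVec, sub_eq_zero] at hx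
    obtain ⟨a, rfl⟩ := hsimple x hx
    have ha : a ≠ 0 := by rintro rfl; simp at hx0
    rw [reQuadForm_smul]
    exact mul_neg_of_pos_of_neg (by positivity) ((reQuadForm_diagonal c u).trans_lt hc)
  obtain ⟨s, hfeas, hs⟩ :=
    ((eventually_primalFeasible_const_add_smul hG hlam hmin hker).and self_mem_nhdsWithin).exists
  have hval : ∑ i, η i * (lam + s * c i) = lam + s * ∑ j, c j * η j := by
    calc ∑ i, η i * (lam + s * c i) = (∑ i, η i) * lam + s * ∑ j, c j * η j := by
          rw [Finset.sum_mul, Finset.mul_sum, ← Finset.sum_add_distrib]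
          exact Finset.sum_congr rfl fun i _ => by ring
      _ = lam + s * ∑ j, c j * η j := by rw [hη1, one_mul]
  have hle := hopt _ hfeas
  rw [hval, add_le_iff_nonpos_right] at hle
  exact nonpos_of_mul_nonpos_right hle hs

end epm

theorem stmt_9_general (m r : ℕ)
    (Φ : Matrix (Fin r) (Fin m) ℂ)
    (hind : LinearIndependent ℂ (fun i : Fin m => fun j : Fin r => Φ j i))
    (η : Fin m → ℝ) (hη1 : ∑ i : Fin m, η i = 1)
    (lam : ℝ)
    -- `lam` is the smallest eigenvalue of the Gram matrix `ΦᴴΦ`: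
    (hmin : ((Φᴴ * Φ) - (lam : ℂ) • 1).PosSemidef)
    -- `lam` is a simple eigenvalue: its eigenspace is one-dimensional:
    (hsimple : ∀ v w : Fin m → ℂ, v ≠ 0 →
      (Φᴴ * Φ).mulVec v = (lam : ℂ) • v → (Φᴴ * Φ).mulVec w = (lam : ℂ) • w →
      ∃ c : ℂ, w = c • v)
    -- the EPM is optimal:
    (hopt : ∀ p : Fin m → ℝ, PrimalFeasible Φ p → ∑ i : Fin m, η i * p i ≤ lam) :
    ∀ u : Fin m → ℂ, (∑ i : Fin m, ‖u i‖ ^ 2 = 1) →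
      (Φᴴ * Φ).mulVec u = (lam : ℂ) • u →
      ∀ i : Fin m, ‖u i‖ ^ 2 = η i := by
  intro u hu hGu
  have hu0 : u ≠ 0 := by rintro rfl; simp at hu
  have hG : (Φᴴ * Φ).PosDef := .conjTranspose_mul_self Φ (mulVec_injective_iff.mpr hind)
  have hlam : 0 < lam := hG.pos_of_mulVec_eq_smul hu0 hGu
  refine congrFun (eq_of_forall_sum_mul_neg_imp_nonpos hu hη1 fun c hc => ?_)
  exact sum_mul_nonpos_of_epm_optimal hG.isUnit hη1 hlam hmin hopt (hsimple u · hu0 hGu) hc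

theorem stmt_9 (m r : ℕ) (hm : 0 < m) (hmr : m ≤ r)
    (Φ : Matrix (Fin r) (Fin m) ℂ)
    (hind : LinearIndependent ℂ (fun i : Fin m => fun j : Fin r => Φ j i))
    (η : Fin m → ℝ) (hη : ∀ i, 0 ≤ η i) (hη1 : ∑ i : Fin m, η i = 1)
    (lam : ℝ)
    -- `lam` is the smallest eigenvalue of the Gram matrix `ΦᴴΦ`:
    (hev : ∃ u : Fin m → ℂ, u ≠ 0 ∧ (Φᴴ * Φ).mulVec u = (lam : ℂ) • u)
    (hmin : ((Φᴴ * Φ) - (lam : ℂ) • 1).PosSemidef)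
    -- `lam` is a simple eigenvalue: its eigenspace is one-dimensional:
    (hsimple : ∀ v w : Fin m → ℂ, v ≠ 0 →
      (Φᴴ * Φ).mulVec v = (lam : ℂ) • v → (Φᴴ * Φ).mulVec w = (lam : ℂ) • w →
      ∃ c : ℂ, w = c • v)
    -- the EPM is optimal:
    (hopt : ∀ p : Fin m → ℝ, PrimalFeasible Φ p → ∑ i : Fin m, η i * p i ≤ lam) :
    ∀ u : Fin m → ℂ, (∑ i : Fin m, ‖u i‖ ^ 2 = 1) →
      (Φᴴ * Φ).mulVec u = (lam : ℂ) • u →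
      ∀ i : Fin m, ‖u i‖ ^ 2 = η i :=
  stmt_9_general m r Φ hind η hη1 lam hmin hsimple hopt
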